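/- arXiv:2204.05125 — 4 statements merged into one kernel-verified Lean document; each statement's English description precedes it below -/
import Mathlib

section
/- (Inherent Estimation Bias of ESMM) Let O, R, C, Ô, R̂, Ĉ be random variables on a probability space D with values in [0,1], satisfying: (i) calibration E[Ô] = E[O] and E[Ĉ] = E[C]; (ii) R̂ = Ĉ/Ô pointwise with Ô > 0 a.s.; (iii) Ô and Ĉ independent; (iv) the click-space conversion rate equals E[C]/E[O] and exceeds the exposure-space conversion rate: E[C]/E[O] > E[R]; (v) Ĉ/Ô and 1/Ô integrable, E[Ĉ] > 0. Then E[R̂] - E[R] > 0, i.e., the ESMM CVR estimate is biased upward. -/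
/-!
Independence of the two towers factorises `E[Ĉ/Ô] = E[Ĉ] · E[1/Ô]`, and Jensen's inequality for
the convex map `x ↦ 1/x` gives `E[1/Ô] ≥ 1/E[Ô]`. With calibration this yields
`E[R̂] ≥ E[C]/E[O]`, which by assumption (iv) exceeds `E[R]`.
-/

open MeasureTheory ProbabilityTheory

section

variable {α : Type*} [MeasurableSpace α] {μ : Measure α}

lemma integral_pos_of_ae_pos [NeZero μ] {f : α → ℝ} (hf_pos : ∀ᵐ x ∂μ, 0 < f x)
    (hf : Integrable f μ) : 0 < ∫ x, f x ∂μ := by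
  rw [integral_pos_iff_support_of_nonneg_ae (hf_pos.mono fun _ hx => hx.le) hf]
  have hsupport : Function.support f =ᵐ[μ] (Set.univ : Set α) :=
    Filter.eventuallyEq_univ.mpr (hf_pos.mono fun _ hx => hx.ne')
  rw [measure_congr hsupport, Measure.measure_univ_pos]
  exact NeZero.ne μ

/-- Integrate the tangent line `2/a - x/a² ≤ 1/x` of `x ↦ 1/x` at `a = ∫ f`. -/
lemma inv_integral_le_integral_inv [IsProbabilityMeasure μ] {f : α → ℝ}
    (hf_pos : ∀ᵐ x ∂μ, 0 < f x) (hf : Integrable f μ) (hf_inv : Integrable (fun x => (f x)⁻¹) μ) :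
    (∫ x, f x ∂μ)⁻¹ ≤ ∫ x, (f x)⁻¹ ∂μ := by
  set a := ∫ x, f x ∂μ
  have ha : 0 < a := integral_pos_of_ae_pos hf_pos hf
  have htangent : ∀ᵐ x ∂μ, 2 / a - f x / a ^ 2 ≤ (f x)⁻¹ := by
    filter_upwards [hf_pos] with x hx
    have hgap : (f x)⁻¹ - (2 / a - f x / a ^ 2) = (f x - a) ^ 2 / (a ^ 2 * f x) := by
      field_simp
      ring
    have : 0 ≤ (f x - a) ^ 2 / (a ^ 2 * f x) := by positivity
    linarith
  calc a⁻¹ = ∫ x, (2 / a - f x / a ^ 2) ∂μ := by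
        rw [integral_sub (integrable_const _) (hf.div_const _), integral_const, integral_div]
        simp only [probReal_univ, one_smul]
        field_simp
        ring
    _ ≤ ∫ x, (f x)⁻¹ ∂μ :=
        integral_mono_ae ((integrable_const _).sub (hf.div_const _)) hf_inv htangent

lemma ProbabilityTheory.IndepFun.integral_div_eq_mul_integral_inv {f g : α → ℝ} (hfg : IndepFun f g μ)
    (hg : AEStronglyMeasurable g μ) (hf_inv : AEStronglyMeasurable (fun x => (f x)⁻¹) μ) :
    ∫ x, g x / f x ∂μ = (∫ x, g x ∂μ) * ∫ x, (f x)⁻¹ ∂μ :=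
  (hfg.symm.comp measurable_id measurable_inv).integral_fun_mul_eq_mul_integral hg hf_inv

end

theorem stmt3_general {Ω : Type*} [MeasureSpace Ω] [IsProbabilityMeasure (ℙ : Measure Ω)]
    (O R C Ohat Chat : Ω → ℝ)
    -- (i) calibration
    (hcalO : (∫ ω, Ohat ω) = ∫ ω, O ω) (hcalC : (∫ ω, Chat ω) = ∫ ω, C ω)
    -- (ii) ratio form with positive denominator a.s.
    (hOhatpos : ∀ᵐ ω ∂ℙ, 0 < Ohat ω)
    -- (iii) independence of the two towers
    (hindep : IndepFun Ohat Chat ℙ)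
    -- (iv) click space conversion rate exceeds exposure space conversion rate
    (hclick : (∫ ω, C ω) / (∫ ω, O ω) > ∫ ω, R ω)
    -- (v) integrability and nondegeneracy
    (hinv : Integrable (fun ω => 1 / Ohat ω) ℙ)
    (hChatpos : 0 < ∫ ω, Chat ω)
    (hOhatint : Integrable Ohat ℙ) (hChatint : Integrable Chat ℙ) :
    (∫ ω, Chat ω / Ohat ω) - (∫ ω, R ω) > 0 := by
  simp only [one_div] at hinv
  have hjensen := inv_integral_le_integral_inv hOhatpos hOhatint hinv
  have hlower : (∫ ω, C ω) / (∫ ω, O ω) ≤ ∫ ω, Chat ω / Ohat ω := by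
    rw [hindep.integral_div_eq_mul_integral_inv hChatint.1 hinv.1, ← hcalC, ← hcalO, div_eq_mul_inv]
    exact mul_le_mul_of_nonneg_left hjensen hChatpos.le
  linarith

/-- Inherent Estimation Bias of ESMM (Theorem 1 of the paper): under calibration of the
CTR and CTCVR estimates, independence of the two towers, `R̂ = Ĉ/Ô`, and the assumption
that the click-space conversion rate `E[C]/E[O]` exceeds the exposure-space rate `E[R]`,
the ESMM CVR estimate is biased upward: `E[R̂] - E[R] > 0`. -/
theorem stmt3 {Ω : Type*} [MeasureSpace Ω] [IsProbabilityMeasure (ℙ : Measure Ω)]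
    (O R C Ohat Chat : Ω → ℝ)
    (hO01 : ∀ ω, O ω ∈ Set.Icc (0 : ℝ) 1) (hR01 : ∀ ω, R ω ∈ Set.Icc (0 : ℝ) 1)
    (hC01 : ∀ ω, C ω ∈ Set.Icc (0 : ℝ) 1)
    (hOhat01 : ∀ ω, Ohat ω ∈ Set.Icc (0 : ℝ) 1) (hChat01 : ∀ ω, Chat ω ∈ Set.Icc (0 : ℝ) 1)
    -- (i) calibration
    (hcalO : (∫ ω, Ohat ω) = ∫ ω, O ω) (hcalC : (∫ ω, Chat ω) = ∫ ω, C ω)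
    -- (ii) ratio form with positive denominator a.s.
    (hOhatpos : ∀ᵐ ω ∂ℙ, 0 < Ohat ω)
    -- (iii) independence of the two towers
    (hindep : IndepFun Ohat Chat ℙ)
    -- (iv) click space conversion rate exceeds exposure space conversion rate
    (hclick : (∫ ω, C ω) / (∫ ω, O ω) > ∫ ω, R ω)
    -- (v) integrability and nondegeneracy
    (hratio : Integrable (fun ω => Chat ω / Ohat ω) ℙ)
    (hinv : Integrable (fun ω => 1 / Ohat ω) ℙ)
    (hChatpos : 0 < ∫ ω, Chat ω)
    (hRint : Integrable R ℙ) (hOint : Integrable O ℙ) (hCint : Integrable C ℙ)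
    (hOhatint : Integrable Ohat ℙ) (hChatint : Integrable Chat ℙ) :
    (∫ ω, Chat ω / Ohat ω) - (∫ ω, R ω) > 0 :=
  stmt3_general O R C Ohat Chat hcalO hcalC hOhatpos hindep hclick hinv hChatpos hOhatint hChatint
end

section
/- Let D be a finite set, and for each d ∈ D let o_d be an independent Bernoulli(q_d) random variable with q_d ∈ (0,1], and δ_d, δ̂_d ∈ ℝ, q̂_d ∈ (0,1]. Define L_DR = (1/|D|) Σ_d [δ̂_d + o_d(δ_d - δ̂_d)/q̂_d]. If δ̂_d = δ_d for all d (accurate imputation), then E[L_DR] = (1/|D|) Σ_d δ_d, regardless of the values q̂_d. -/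
open Finset

theorem Fintype.sum_prod_bernoulli_weights {ι R : Type*} [Fintype ι] [DecidableEq ι]
    [CommRing R] (p : ι → R) :
    ∑ o : ι → Bool, ∏ i, (if o i then p i else 1 - p i) = 1 := by
  rw [← Fintype.prod_sum fun i (b : Bool) => if b then p i else 1 - p i]
  simp

theorem stmt6_general {D : Type*} [Fintype D] [DecidableEq D]
    (q qhat : D → ℝ)
    (δ δhat : D → ℝ) (heq : ∀ d, δhat d = δ d) :
    ∑ o : D → Bool, (∏ d, if o d then q d else 1 - q d) *
        ((Fintype.card D : ℝ)⁻¹ *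
          ∑ d, (δhat d + (if o d then (1 : ℝ) else 0) * (δ d - δhat d) / qhat d))
      = (Fintype.card D : ℝ)⁻¹ * ∑ d, δ d := by
  have h_exact : ∀ o : D → Bool,
      ∑ d, (δhat d + (if o d then (1 : ℝ) else 0) * (δ d - δhat d) / qhat d) = ∑ d, δ d :=
    fun o => by simp only [heq, sub_self, mul_zero, zero_div, add_zero]
  simp only [h_exact, ← Finset.sum_mul, Fintype.sum_prod_bernoulli_weights, one_mul]

/-- Unbiasedness of the doubly robust estimator when the imputation is accurate:
if `δ̂ d = δ d` for all `d`, then `E[L_DR] = (1/|D|) Σ_d δ_d`, regardless of the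
estimated propensities `q̂`. -/
theorem stmt6 {D : Type*} [Fintype D] [DecidableEq D] [Nonempty D]
    (q qhat : D → ℝ) (hq : ∀ d, q d ∈ Set.Ioc (0 : ℝ) 1)
    (hqhat : ∀ d, qhat d ∈ Set.Ioc (0 : ℝ) 1)
    (δ δhat : D → ℝ) (heq : ∀ d, δhat d = δ d) :
    ∑ o : D → Bool, (∏ d, if o d then q d else 1 - q d) *
        ((Fintype.card D : ℝ)⁻¹ *
          ∑ d, (δhat d + (if o d then (1 : ℝ) else 0) * (δ d - δhat d) / qhat d))
      = (Fintype.card D : ℝ)⁻¹ * ∑ d, δ d :=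
  stmt6_general q qhat δ δhat heq
end

section
/- (Stratified IPS identity) Let Ω be a finite probability space partitioned into events L_1, ..., L_K of positive probability. Suppose O : Ω → {0,1} and δ : Ω → ℝ are such that, conditional on each L_k, O and δ are independent, and let q̂ : Ω → (0,1] be constant on each L_k with value E[O | L_k] > 0. Then E[O·δ/q̂] = Σ_k P(L_k)·E[δ | L_k]. -/
/-!
Split `E[O δ / q̂]` over the strata. On `L k` the weight `q̂` is the constant `E[O | L k]`, and
conditional independence gives `E[O δ | L k] = E[O | L k] E[δ | L k]`, so the stratum contributes
`P(L k) E[δ | L k]`. The product rule itself only needs independence of the events `{O = 1}` and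
`{δ = b}`: since `O` is `{0,1}`-valued, `E[O δ | L k] = Σ_b b P(O = 1, δ = b | L k)`.
-/

open Finset

theorem Finset.sum_eq_sum_sum_of_partition {ι Ω M : Type*} [Fintype ι] [Fintype Ω] [AddCommMonoid M]
    (L : ι → Finset Ω) (hdisj : ∀ i j, i ≠ j → Disjoint (L i) (L j))
    (hcover : ∀ ω, ∃ i, ω ∈ L i) (f : Ω → M) :
    ∑ ω, f ω = ∑ i, ∑ ω ∈ L i, f ω := by
  classical
  have huniv : (univ : Finset Ω) = univ.biUnion L := by
    ext ω
    simpa using hcover ω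
  rw [huniv, sum_biUnion fun i _ j _ hij => hdisj i j hij]

theorem Finset.sum_filter_eq_one_eq_sum_mul {Ω R : Type*} [Semiring R] [DecidableEq R]
    {s : Finset Ω} {O : Ω → R} (hO : ∀ ω ∈ s, O ω = 0 ∨ O ω = 1) (w : Ω → R) :
    ∑ ω ∈ s with O ω = 1, w ω = ∑ ω ∈ s, w ω * O ω := by
  rw [sum_filter]
  refine sum_congr rfl fun ω hω => ?_
  by_cases h1 : O ω = 1
  · rw [if_pos h1, h1, mul_one]
  · rw [if_neg h1, (hO ω hω).resolve_right h1, mul_zero]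

theorem Finset.sum_mul_eq_sum_image_mul_sum_fiber {Ω R : Type*} [CommSemiring R] [DecidableEq R]
    (s : Finset Ω) (w f : Ω → R) :
    ∑ ω ∈ s, w ω * f ω = ∑ b ∈ s.image f, b * ∑ ω ∈ s with f ω = b, w ω := by
  rw [← sum_fiberwise_of_maps_to fun ω hω => mem_image_of_mem f hω]
  refine sum_congr rfl fun b _ => ?_
  rw [mul_sum]
  refine sum_congr rfl fun ω hω => ?_
  rw [(mem_filter.mp hω).2, mul_comm]

theorem Finset.sum_mul_div_eq_of_indep {Ω R : Type*} [Field R] [DecidableEq R]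
    (S : Finset Ω) (p O δ : Ω → R) (hO : ∀ ω ∈ S, O ω = 0 ∨ O ω = 1)
    (hindep : ∀ b : R,
      (∑ ω ∈ S with O ω = 1 ∧ δ ω = b, p ω) / ∑ ω ∈ S, p ω
        = (∑ ω ∈ S with O ω = 1, p ω) / (∑ ω ∈ S, p ω) *
          ((∑ ω ∈ S with δ ω = b, p ω) / ∑ ω ∈ S, p ω)) :
    (∑ ω ∈ S, p ω * (O ω * δ ω)) / ∑ ω ∈ S, p ω
      = (∑ ω ∈ S, p ω * O ω) / (∑ ω ∈ S, p ω) * ((∑ ω ∈ S, p ω * δ ω) / ∑ ω ∈ S, p ω) := by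
  set P := ∑ ω ∈ S, p ω
  have hjoint : ∀ b, ∑ ω ∈ S with δ ω = b, p ω * O ω = ∑ ω ∈ S with O ω = 1 ∧ δ ω = b, p ω := by
    intro b
    rw [← sum_filter_eq_one_eq_sum_mul fun ω hω => hO ω (mem_filter.mp hω).1, filter_filter]
    exact sum_congr (filter_congr fun ω _ => and_comm) fun _ _ => rfl
  have hlayer : ∑ ω ∈ S, p ω * (O ω * δ ω)
      = ∑ b ∈ S.image δ, b * ∑ ω ∈ S with O ω = 1 ∧ δ ω = b, p ω := by
    simp_rw [← mul_assoc]
    rw [sum_mul_eq_sum_image_mul_sum_fiber S (fun ω => p ω * O ω) δ]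
    simp_rw [hjoint]
  calc (∑ ω ∈ S, p ω * (O ω * δ ω)) / P
      = ∑ b ∈ S.image δ, b * ((∑ ω ∈ S with O ω = 1 ∧ δ ω = b, p ω) / P) := by
        rw [hlayer, sum_div]
        simp_rw [mul_div_assoc]
    _ = (∑ ω ∈ S with O ω = 1, p ω) / P * ((∑ ω ∈ S, p ω * δ ω) / P) := by
        rw [sum_mul_eq_sum_image_mul_sum_fiber S p δ, sum_div (S.image δ), mul_sum]
        refine sum_congr rfl fun b _ => ?_
        rw [hindep]
        ring
    _ = (∑ ω ∈ S, p ω * O ω) / P * ((∑ ω ∈ S, p ω * δ ω) / P) := by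
        rw [sum_filter_eq_one_eq_sum_mul hO]

theorem stmt11_general {Ω : Type*} [Fintype Ω] {K : ℕ}
    (p : Ω → ℝ)
    (L : Fin K → Finset Ω)
    (hdisj : ∀ i j, i ≠ j → Disjoint (L i) (L j))
    (hcover : ∀ ω : Ω, ∃ k, ω ∈ L k)
    (hLpos : ∀ k, 0 < ∑ ω ∈ L k, p ω)
    (O δ qhat : Ω → ℝ)
    (hO : ∀ ω, O ω = 0 ∨ O ω = 1)
    -- conditional independence of `O` and `δ` given each stratum
    (hindep : ∀ k, ∀ a b : ℝ,
      ((∑ ω ∈ (L k).filter (fun ω => O ω = a ∧ δ ω = b), p ω) / ∑ ω ∈ L k, p ω)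
        = ((∑ ω ∈ (L k).filter (fun ω => O ω = a), p ω) / ∑ ω ∈ L k, p ω) *
          ((∑ ω ∈ (L k).filter (fun ω => δ ω = b), p ω) / ∑ ω ∈ L k, p ω))
    -- `q̂` is constant on each stratum, equal to `E[O | L k] > 0`
    (hqhatval : ∀ k, ∀ ω ∈ L k,
      qhat ω = (∑ ω' ∈ L k, p ω' * O ω') / ∑ ω' ∈ L k, p ω')
    (hEOpos : ∀ k, 0 < (∑ ω' ∈ L k, p ω' * O ω') / ∑ ω' ∈ L k, p ω') :
    (∑ ω, p ω * (O ω * δ ω / qhat ω))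
      = ∑ k, (∑ ω ∈ L k, p ω) * ((∑ ω ∈ L k, p ω * δ ω) / ∑ ω ∈ L k, p ω) := by
  rw [sum_eq_sum_sum_of_partition L hdisj hcover]
  refine sum_congr rfl fun k _ => ?_
  have hP := (hLpos k).ne'
  have hA := (div_ne_zero_iff.mp (hEOpos k).ne').1
  have hprod := sum_mul_div_eq_of_indep (L k) p O δ (fun ω _ => hO ω) (hindep k 1)
  calc ∑ ω ∈ L k, p ω * (O ω * δ ω / qhat ω)
      = (∑ ω ∈ L k, p ω * (O ω * δ ω)) / ((∑ ω ∈ L k, p ω * O ω) / ∑ ω ∈ L k, p ω) := by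
        rw [sum_div]
        refine sum_congr rfl fun ω hω => ?_
        rw [hqhatval k ω hω]
        ring
    _ = _ := by
        rw [div_eq_iff hP] at hprod
        rw [hprod]
        field_simp

/-- Stratified IPS identity (Theorem 3 of the paper): on a finite probability space
partitioned into strata `L k` with positive probability, if `O` and `δ` are independent
conditional on each stratum and `q̂` is constant on each stratum with value `E[O | L k] > 0`,
then `E[O·δ/q̂] = Σ_k P(L k) · E[δ | L k]`. -/
theorem stmt11 {Ω : Type*} [Fintype Ω] {K : ℕ}
    (p : Ω → ℝ) (hp : ∀ ω, 0 ≤ p ω) (hsum : ∑ ω, p ω = 1)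
    (L : Fin K → Finset Ω)
    (hdisj : ∀ i j, i ≠ j → Disjoint (L i) (L j))
    (hcover : ∀ ω : Ω, ∃ k, ω ∈ L k)
    (hLpos : ∀ k, 0 < ∑ ω ∈ L k, p ω)
    (O δ qhat : Ω → ℝ)
    (hO : ∀ ω, O ω = 0 ∨ O ω = 1)
    (hqhat01 : ∀ ω, qhat ω ∈ Set.Ioc (0 : ℝ) 1)
    -- conditional independence of `O` and `δ` given each stratum
    (hindep : ∀ k, ∀ a b : ℝ,
      ((∑ ω ∈ (L k).filter (fun ω => O ω = a ∧ δ ω = b), p ω) / ∑ ω ∈ L k, p ω)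
        = ((∑ ω ∈ (L k).filter (fun ω => O ω = a), p ω) / ∑ ω ∈ L k, p ω) *
          ((∑ ω ∈ (L k).filter (fun ω => δ ω = b), p ω) / ∑ ω ∈ L k, p ω))
    -- `q̂` is constant on each stratum, equal to `E[O | L k] > 0`
    (hqhatval : ∀ k, ∀ ω ∈ L k,
      qhat ω = (∑ ω' ∈ L k, p ω' * O ω') / ∑ ω' ∈ L k, p ω')
    (hEOpos : ∀ k, 0 < (∑ ω' ∈ L k, p ω' * O ω') / ∑ ω' ∈ L k, p ω') :
    (∑ ω, p ω * (O ω * δ ω / qhat ω))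
      = ∑ k, (∑ ω ∈ L k, p ω) * ((∑ ω ∈ L k, p ω * δ ω) / ∑ ω ∈ L k, p ω) :=
  stmt11_general p L hdisj hcover hLpos O δ qhat hO hindep hqhatval hEOpos
end

section
/- Let (Ω, μ) be a probability space, A ⊆ Ω a measurable set with μ(A) > 0, and δ : Ω → ℝ integrable. Define the propensity q : Ω → [0,1] by q = E[1_A | σ(F)] for the σ-algebra σ(F) generated by features F, and assume q > 0 a.s. and δ is σ(F)-measurable. Then μ(A)·E[δ/q | A] = E[δ], i.e., (|O|/|D|)·E_O[δ/q] = E_D[δ] in the paper's notation (the click space O = A, exposure space D = Ω). -/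
open MeasureTheory ProbabilityTheory

private lemma aux_ind {Ω : Type*} [m : MeasurableSpace Ω] {μ : MeasureTheory.Measure Ω}
    {f : Ω → ℝ} {A : Set Ω} (h : MeasureTheory.Integrable f (μ.restrict A))
    (hA : MeasurableSet A) : MeasureTheory.Integrable (A.indicator f) μ :=
  MeasureTheory.IntegrableOn.integrable_indicator h hA

private lemma aux_const {Ω : Type*} [m : MeasurableSpace Ω] {μ : MeasureTheory.Measure Ω}
    [MeasureTheory.IsFiniteMeasure μ] {A : Set Ω} (hA : MeasurableSet A) :
    MeasureTheory.Integrable (A.indicator (fun _ => (1 : ℝ))) μ :=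
  (MeasureTheory.integrable_const (1 : ℝ)).indicator hA

private lemma aux_int_ind {Ω : Type*} [m : MeasurableSpace Ω] {μ : MeasureTheory.Measure Ω}
    {f : Ω → ℝ} {A : Set Ω} (hA : MeasurableSet A) :
    ∫ ω, A.indicator f ω ∂μ = ∫ ω in A, f ω ∂μ :=
  MeasureTheory.integral_indicator hA

/-- Bayes/IPS identity of Theorem 2: if `q = E[1_A | G]` a.s. is positive a.s. and
`δ` is `G`-measurable and integrable, then `μ(A) · E[δ/q | A] = E[δ]`, i.e.
`(|O|/|D|) E_O[δ/q̂] = E_D[δ]`. -/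
theorem stmt13 {Ω : Type*} (G : MeasurableSpace Ω) {m : MeasurableSpace Ω} {μ : Measure Ω} [IsProbabilityMeasure μ]
    (hG : G ≤ m)
    (A : Set Ω) (hA : MeasurableSet A) (hApos : 0 < μ A)
    (δ q : Ω → ℝ)
    (hq : q =ᵐ[μ] μ[A.indicator (fun _ => (1 : ℝ)) | G])
    (hqpos : ∀ᵐ ω ∂μ, 0 < q ω)
    (hδmeas : StronglyMeasurable[G] δ) (hδint : Integrable δ μ)
    (hint : Integrable (fun ω => δ ω / q ω) (μ[|A])) :
    (μ A).toReal * ∫ ω, δ ω / q ω ∂(μ[|A]) = ∫ ω, δ ω ∂μ := by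
  have hAm : MeasurableSet[m] A := hA
  set q' : Ω → ℝ := μ[A.indicator (fun _ => (1 : ℝ)) | G] with hq'def
  have hμA0 : μ A ≠ 0 := hApos.ne'
  have hμAtop : μ A ≠ ⊤ := measure_ne_top μ A
  have hq'meas : StronglyMeasurable[G] q' := stronglyMeasurable_condExp
  have hq'pos : ∀ᵐ ω ∂μ, 0 < q' ω := by
    filter_upwards [hq, hqpos] with ω h1 h2; rwa [← h1]
  have hfmeas : StronglyMeasurable[G] (fun ω => δ ω / q' ω) := (hδmeas.measurable.div hq'meas.measurable).stronglyMeasurable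
  -- integrability on A
  have hIntRestrict : Integrable (fun ω => δ ω / q ω) (μ.restrict A) := by
    have := hint
    rw [ProbabilityTheory.cond] at this
    exact (integrable_smul_measure (by simpa using hμAtop) (by simpa using hμA0)).mp this
  have hIndInt : Integrable (A.indicator (fun ω => δ ω / q ω)) μ :=
    aux_ind (m := m) hIntRestrict hAm
  have hfg_eq : (fun ω => δ ω / q' ω) * A.indicator (fun _ => (1 : ℝ))
      =ᵐ[μ] A.indicator (fun ω => δ ω / q ω) := by
    filter_upwards [hq] with ω hω
    by_cases hmem : ω ∈ A <;>
      simp [Set.indicator_of_mem, Set.indicator_of_notMem, hmem, hω]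
  have hfgInt : Integrable ((fun ω => δ ω / q' ω) * A.indicator (fun _ => (1 : ℝ))) μ :=
    hIndInt.congr hfg_eq.symm
  have hgInt : Integrable (A.indicator (fun _ => (1 : ℝ))) μ :=
    aux_const (m := m) hAm
  -- pull-out property
  have hpull := condExp_mul_of_stronglyMeasurable_left (μ := μ) (m := G) hfmeas hfgInt hgInt
  -- the conditional expectation equals δ a.e.
  have hcond : μ[(fun ω => δ ω / q' ω) * A.indicator (fun _ => (1 : ℝ)) | G] =ᵐ[μ] δ := by
    refine hpull.trans ?_
    filter_upwards [hq'pos] with ω hω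
    simp only [Pi.mul_apply]
    rw [← hq'def]
    field_simp
  -- key integral identity
  have hkey : ∫ ω, A.indicator (fun ω => δ ω / q ω) ω ∂μ = ∫ ω, δ ω ∂μ := by
    rw [← integral_congr_ae hfg_eq, ← integral_condExp hG,
      integral_congr_ae hcond]
  have hrestr : ∫ ω, δ ω / q ω ∂(μ.restrict A) = ∫ ω, δ ω ∂μ := by
    exact (aux_int_ind (m := m) (μ := μ) hAm).symm.trans hkey
  rw [ProbabilityTheory.cond, integral_smul_measure, smul_eq_mul, ← mul_assoc,
    ENNReal.toReal_inv, mul_inv_cancel₀ (by simp [ENNReal.toReal_ne_zero, hμA0, hμAtop]),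
    one_mul, hrestr]
end
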